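/- arXiv:2602.01049 — 4 statements merged into one kernel-verified Lean document; each statement's English description precedes it below -/
import Mathlib

section
/- For real a > 0 and 0 < b < π/2, if a² + b² < κ² where κ = arcosh(3/2), then cosh a − cos b < 1/2. -/
theorem cosh_sub_cos_lt_half (a b κ : ℝ) (ha : 0 < a) (hb0 : 0 < b) (hb : b < Real.pi / 2)
    (hκ : 0 < κ) (hκ2 : Real.cosh κ = 3 / 2) (h : a ^ 2 + b ^ 2 < κ ^ 2) :
    Real.cosh a - Real.cos b < 1 / 2 := by
  set r := Real.sqrt (a ^ 2 + b ^ 2) with hrdef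
  have hab : (0:ℝ) ≤ a ^ 2 + b ^ 2 := by positivity
  have hr2 : r ^ 2 = a ^ 2 + b ^ 2 := Real.sq_sqrt hab
  have hr0 : 0 ≤ r := Real.sqrt_nonneg _
  have har : a ≤ r := by nlinarith [sq_nonneg (r - a), sq_nonneg b]
  set d := r - a with hddef
  have hd0 : 0 ≤ d := by linarith
  -- cosh d ≥ 1 + d^2/2
  have hcd : 1 + d ^ 2 / 2 ≤ Real.cosh d := by
    have h1 : Real.cosh d = 2 * Real.sinh (d / 2) ^ 2 + 1 := by
      have := Real.cosh_sq (d / 2)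
      have h2 : Real.cosh d = 2 * Real.cosh (d / 2) ^ 2 - 1 := by
        have := Real.cosh_two_mul (d / 2)
        rw [show 2 * (d / 2) = d by ring] at this
        linarith
      linarith
    have h3 : d / 2 ≤ Real.sinh (d / 2) := Real.self_le_sinh_iff.2 (by linarith)
    nlinarith [sq_nonneg (Real.sinh (d / 2) - d / 2)]
  have hsa : a ≤ Real.sinh a := Real.self_le_sinh_iff.2 ha.le
  have hsd : d ≤ Real.sinh d := Real.self_le_sinh_iff.2 hd0
  have hca : 1 ≤ Real.cosh a := Real.one_le_cosh a
  -- cosh r ≥ cosh a + b^2/2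
  have key : Real.cosh a + b ^ 2 / 2 ≤ Real.cosh r := by
    have : Real.cosh r = Real.cosh a * Real.cosh d + Real.sinh a * Real.sinh d := by
      rw [show r = a + d by ring, Real.cosh_add]
    nlinarith [mul_le_mul hsa hsd hd0 (by linarith : (0:ℝ) ≤ Real.sinh a)]
  -- r < κ so cosh r < 3/2
  have hrκ : Real.cosh r < 3 / 2 := by
    rw [← hκ2]
    rw [Real.cosh_lt_cosh]
    rw [abs_of_nonneg hr0, abs_of_nonneg hκ.le]
    nlinarith
  have hcos : 1 - b ^ 2 / 2 < Real.cos b := Real.one_sub_sq_div_two_lt_cos (ne_of_gt hb0)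
  linarith
end

section
/- Let ξ = a + bi with a > 0, 0 < b < π/2, and cosh a · cos b > 1/2, and let φ be the complex number with cosh φ = cosh ξ − 1/2, Re φ > 0 and 0 < Im φ < π. Write φ = c + di. Then arsinh(sinh a · sin b) < c < a and b < d < π/2. -/
/-!
Write `cosh φ = u + v i` with `u = cosh c cos d`, `v = sinh c sin d`. Since
`cosh² c + cos² d = 1 + u² + v²` and `cosh² c · cos² d = u²`, the numbers `cos² d ≤ 1 ≤ cosh² c`
are the roots of `t² - (1 + u² + v²) t + u²`. Passing from `ξ` to `φ` keeps `v` and lowers `u²`,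
which changes this quadratic by `(u_ξ² - u_φ²)(t - 1)`. Evaluating at the old roots `cosh² a > 1`
and `cos² b < 1` gives a positive and a negative value respectively, which places them outside
and inside the new roots: `cosh² c < cosh² a` and `cos² d < cos² b`.
-/

open Real

namespace Real

variable {a b c d : ℝ}

theorem cosh_sq_add_cos_sq (x y : ℝ) :
    cosh x ^ 2 + cos y ^ 2 = 1 + (cosh x * cos y) ^ 2 + (sinh x * sin y) ^ 2 := by
  linear_combination (1 - cos y ^ 2) * cosh_sq x - sinh x ^ 2 * sin_sq_add_cos_sq y

theorem sub_cosh_sq_mul_sub_cos_sq_of_sinh_mul_sin_eq (h : sinh c * sin d = sinh a * sin b)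
    (t : ℝ) :
    (t - cosh c ^ 2) * (t - cos d ^ 2) =
      (t - cosh a ^ 2) * (t - cos b ^ 2) +
        ((cosh a * cos b) ^ 2 - (cosh c * cos d) ^ 2) * (t - 1) := by
  linear_combination t * (cosh_sq_add_cos_sq a b - cosh_sq_add_cos_sq c d)
    - t * (sinh c * sin d + sinh a * sin b) * h

theorem cosh_lt_cosh_of_sinh_mul_sin_eq (h : sinh c * sin d = sinh a * sin b)
    (hlt : (cosh c * cos d) ^ 2 < (cosh a * cos b) ^ 2) (ha : a ≠ 0) : cosh c < cosh a := by
  have hcosh_a : 1 < cosh a ^ 2 := one_lt_pow₀ (one_lt_cosh.2 ha) two_ne_zero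
  have hprod := sub_cosh_sq_mul_sub_cos_sq_of_sinh_mul_sin_eq h (cosh a ^ 2)
  rw [sub_self, zero_mul, zero_add] at hprod
  have hpos : 0 < (cosh a ^ 2 - cosh c ^ 2) * (cosh a ^ 2 - cos d ^ 2) :=
    hprod ▸ mul_pos (by linarith) (by linarith)
  have hsq : cosh c ^ 2 < cosh a ^ 2 := by
    linarith [pos_of_mul_pos_left hpos (by linarith [cos_sq_le_one d])]
  exact (pow_lt_pow_iff_left₀ (cosh_pos c).le (cosh_pos a).le two_ne_zero).1 hsq

theorem abs_cos_lt_abs_cos_of_sinh_mul_sin_eq (h : sinh c * sin d = sinh a * sin b)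
    (hlt : (cosh c * cos d) ^ 2 < (cosh a * cos b) ^ 2) (hb : sin b ≠ 0) : |cos d| < |cos b| := by
  have hcos_b : cos b ^ 2 < 1 := by nlinarith [sin_sq_add_cos_sq b, sq_pos_of_ne_zero hb]
  have hprod := sub_cosh_sq_mul_sub_cos_sq_of_sinh_mul_sin_eq h (cos b ^ 2)
  rw [sub_self, mul_zero, zero_add] at hprod
  have hneg : (cos b ^ 2 - cosh c ^ 2) * (cos b ^ 2 - cos d ^ 2) < 0 :=
    hprod ▸ mul_neg_of_pos_of_neg (by linarith) (by linarith)
  have hcosh_c : 1 ≤ cosh c ^ 2 := one_le_pow₀ (one_le_cosh c)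
  exact sq_lt_sq.1 (by linarith [pos_of_mul_neg_right hneg (by linarith)])

end Real

namespace Complex

theorem cosh_ofReal_add_ofReal_mul_I (x y : ℝ) :
    cosh (x + y * I) = (Real.cosh x * Real.cos y : ℝ) + (Real.sinh x * Real.sin y : ℝ) * I := by
  rw [cosh_add, cosh_mul_I, sinh_mul_I]
  push_cast [← ofReal_cosh, ← ofReal_sinh, ← ofReal_cos, ← ofReal_sin]
  ring

theorem cosh_re (z : ℂ) : (cosh z).re = Real.cosh z.re * Real.cos z.im := by
  conv_lhs => rw [← re_add_im z, cosh_ofReal_add_ofReal_mul_I]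
  simp only [add_re, mul_re, ofReal_re, ofReal_im, I_re, I_im]
  ring

theorem cosh_im (z : ℂ) : (cosh z).im = Real.sinh z.re * Real.sin z.im := by
  conv_lhs => rw [← re_add_im z, cosh_ofReal_add_ofReal_mul_I]
  simp only [add_im, mul_im, ofReal_re, ofReal_im, I_re, I_im]
  ring

end Complex

theorem phi_location (a b : ℝ) (φ : ℂ)
    (ha : 0 < a) (hb0 : 0 < b) (hb : b < Real.pi / 2)
    (hα : Real.cosh a * Real.cos b > 1 / 2)
    (hφ : Complex.cosh φ = Complex.cosh (a + b * Complex.I) - 1 / 2)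
    (hc : 0 < φ.re) (hd0 : 0 < φ.im) (hd : φ.im < Real.pi) :
    Real.arsinh (Real.sinh a * Real.sin b) < φ.re ∧ φ.re < a ∧
      b < φ.im ∧ φ.im < Real.pi / 2 := by
  set c := φ.re
  set d := φ.im
  have hu : cosh c * cos d = cosh a * cos b - 1 / 2 := by
    simpa [Complex.cosh_re] using congrArg Complex.re hφ
  have hv : sinh c * sin d = sinh a * sin b := by
    simpa [Complex.cosh_im] using congrArg Complex.im hφ
  have hcos_d : 0 < cos d := pos_of_mul_pos_right (hu ▸ by linarith) (cosh_pos c).le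
  have hcos_b : 0 < cos b := cos_pos_of_mem_Ioo ⟨by linarith, hb⟩
  have hsq : (cosh c * cos d) ^ 2 < (cosh a * cos b) ^ 2 :=
    pow_lt_pow_left₀ (by linarith) (mul_pos (cosh_pos c) hcos_d).le two_ne_zero
  refine ⟨?_, ?_, ?_, ?_⟩
  · have hsin_d : sin d < 1 := by nlinarith [sin_sq_add_cos_sq d, sin_le_one d]
    rw [← hv]
    exact (arsinh_lt_arsinh.2 (by nlinarith [sinh_pos_iff.2 hc])).trans_eq (arsinh_sinh c)
  · have := cosh_lt_cosh.1 (cosh_lt_cosh_of_sinh_mul_sin_eq hv hsq ha.ne')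
    rwa [abs_of_pos hc, abs_of_pos ha] at this
  · have := abs_cos_lt_abs_cos_of_sinh_mul_sin_eq hv hsq
      (sin_pos_of_pos_of_lt_pi hb0 (by linarith [pi_pos])).ne'
    rw [abs_of_pos hcos_d, abs_of_pos hcos_b] at this
    exact (strictAntiOn_cos.lt_iff_gt ⟨hd0.le, hd.le⟩ ⟨hb0.le, by linarith [pi_pos]⟩).1 this
  · by_contra! h
    linarith [cos_nonpos_of_pi_div_two_le_of_le h (by linarith [pi_pos])]
end

section
/- Let α, β be real numbers and define Φ(X,Y) := (α − cosh X · cos Y)² + (β − sinh X · sin Y)². Then the critical points of Φ in the strip −π < Y < π, other than (0,0), satisfy cosh X · cos Y = α and sinh X · sin Y = β; moreover at any such critical point sinh²X = (α² + β² − 1 + √((α²+β²−1)² + 4β²))/2 and sin²Y = (1 − α² − β² + √((α²+β²−1)² + 4β²))/2. -/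
theorem critical_points (α β X Y : ℝ) (hα : 1 / 2 < α) (hβ : 0 < β)
    (hY1 : -Real.pi < Y) (hY2 : Y < Real.pi) (hne : (X, Y) ≠ (0, 0))
    (hX : Real.sinh X * Real.cosh X - β * Real.cosh X * Real.sin Y
        - α * Real.sinh X * Real.cos Y = 0)
    (hY : -(Real.sin Y * Real.cos Y) - β * Real.sinh X * Real.cos Y
        + α * Real.cosh X * Real.sin Y = 0) :
    Real.cosh X * Real.cos Y = α ∧ Real.sinh X * Real.sin Y = β ∧
      Real.sinh X ^ 2
        = (α ^ 2 + β ^ 2 - 1 + Real.sqrt ((α ^ 2 + β ^ 2 - 1) ^ 2 + 4 * β ^ 2)) / 2 ∧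
      Real.sin Y ^ 2
        = (1 - α ^ 2 - β ^ 2 + Real.sqrt ((α ^ 2 + β ^ 2 - 1) ^ 2 + 4 * β ^ 2)) / 2 := by
  set s := Real.sinh X with hs
  set c := Real.cosh X with hc
  set u := Real.sin Y with hu
  set v := Real.cos Y with hv
  have hpc : c ^ 2 = 1 + s ^ 2 := by
    rw [hc, hs]; linarith [Real.cosh_sq X]
  have huv : u ^ 2 + v ^ 2 = 1 := by
    rw [hu, hv]; exact Real.sin_sq_add_cos_sq Y
  have hc1 : 1 ≤ c := by rw [hc]; exact Real.one_le_cosh X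
  clear_value s c u v
  -- the two combined equations
  have e1 : (α - c * v) * (s * v) + (β - s * u) * (c * u) = 0 := by
    linear_combination (-(1 : ℝ)) * hX - s * c * huv
  have e2 : (β - s * u) * (s * v) - (α - c * v) * (c * u) = 0 := by
    linear_combination (-(1 : ℝ)) * hY + u * v * hpc
  have hprod : ((α - c * v) ^ 2 + (β - s * u) ^ 2) * ((s * v) ^ 2 + (c * u) ^ 2) = 0 := by
    linear_combination ((α - c * v) * (s * v) + (β - s * u) * (c * u)) * e1
      + ((β - s * u) * (s * v) - (α - c * v) * (c * u)) * e2
  rcases mul_eq_zero.mp hprod with h | h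
  · -- cosh z = α + iβ
    have h1 : (α - c * v) ^ 2 = 0 :=
      le_antisymm (by linarith [sq_nonneg (β - s * u)]) (sq_nonneg _)
    have h2 : (β - s * u) ^ 2 = 0 :=
      le_antisymm (by linarith [sq_nonneg (α - c * v)]) (sq_nonneg _)
    have hA : c * v = α := by
      have := (pow_eq_zero_iff two_ne_zero).mp h1; linarith
    have hB : s * u = β := by
      have := (pow_eq_zero_iff two_ne_zero).mp h2; linarith
    have eqA : c ^ 2 * v ^ 2 = α ^ 2 := by linear_combination (c * v + α) * hA
    have eqB : s ^ 2 * u ^ 2 = β ^ 2 := by linear_combination (s * u + β) * hB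
    have hu2 : u ^ 2 = s ^ 2 - (α ^ 2 + β ^ 2 - 1) := by
      linear_combination -eqA - eqB + v ^ 2 * hpc + (1 + s ^ 2) * huv
    refine ⟨hA, hB, ?_, ?_⟩
    · have hs0 : 0 < s ^ 2 := by
        rcases eq_or_ne s 0 with h0 | h0
        · exfalso; rw [h0, zero_mul] at hB; linarith
        · positivity
      have hSk : s ^ 2 * s ^ 2 = (α ^ 2 + β ^ 2 - 1) * s ^ 2 + β ^ 2 := by
        linear_combination eqB - s ^ 2 * hu2
      have h2' : 0 ≤ 2 * s ^ 2 - (α ^ 2 + β ^ 2 - 1) := by nlinarith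
      have hsq : Real.sqrt ((α ^ 2 + β ^ 2 - 1) ^ 2 + 4 * β ^ 2)
          = 2 * s ^ 2 - (α ^ 2 + β ^ 2 - 1) := by
        rw [show (α ^ 2 + β ^ 2 - 1) ^ 2 + 4 * β ^ 2
            = (2 * s ^ 2 - (α ^ 2 + β ^ 2 - 1)) ^ 2 by linear_combination -4 * hSk]
        exact Real.sqrt_sq h2'
      rw [hsq]; ring
    · have hu0 : 0 < u ^ 2 := by
        rcases eq_or_ne u 0 with h0 | h0
        · exfalso; rw [h0, mul_zero] at hB; linarith
        · positivity
      have hUk : u ^ 2 * u ^ 2 = -(α ^ 2 + β ^ 2 - 1) * u ^ 2 + β ^ 2 := by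
        linear_combination eqB + u ^ 2 * hu2
      have h2' : 0 ≤ 2 * u ^ 2 + (α ^ 2 + β ^ 2 - 1) := by nlinarith
      have hsq : Real.sqrt ((α ^ 2 + β ^ 2 - 1) ^ 2 + 4 * β ^ 2)
          = 2 * u ^ 2 + (α ^ 2 + β ^ 2 - 1) := by
        rw [show (α ^ 2 + β ^ 2 - 1) ^ 2 + 4 * β ^ 2
            = (2 * u ^ 2 + (α ^ 2 + β ^ 2 - 1)) ^ 2 by linear_combination -4 * hUk]
        exact Real.sqrt_sq h2'
      rw [hsq]; ring
  · -- sinh z = 0, contradiction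
    exfalso
    have h1 : (c * u) ^ 2 = 0 :=
      le_antisymm (by linarith [sq_nonneg (s * v)]) (sq_nonneg _)
    have h2 : (s * v) ^ 2 = 0 :=
      le_antisymm (by linarith [sq_nonneg (c * u)]) (sq_nonneg _)
    have hcu : c * u = 0 := (pow_eq_zero_iff two_ne_zero).mp h1
    have hsv : s * v = 0 := (pow_eq_zero_iff two_ne_zero).mp h2
    have hu0 : u = 0 := by
      rcases mul_eq_zero.mp hcu with h' | h'
      · linarith
      · exact h'
    have hY0 : Y = 0 := (Real.sin_eq_zero_iff_of_lt_of_lt hY1 hY2).mp (hu ▸ hu0)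
    have hv1 : v = 1 := by rw [hv, hY0, Real.cos_zero]
    have hs0 : s = 0 := by rw [hv1] at hsv; linarith
    have hX0 : X = 0 := by
      rw [hs] at hs0
      exact Real.sinh_eq_zero.mp hs0
    exact hne (by rw [hX0, hY0])
end

section
/- Let ξ = a + bi with a > 0, 0 < b < π/2 and cosh a · cos b > 1/2, and let φ = c + di satisfy cosh φ = cosh ξ − 1/2 with c > 0 and 0 < d < π/2 (so cosh c · cos d = cosh a · cos b − 1/2 and sinh c · sin d = sinh a · sin b). Then cosh(a + c) − cos(b + d) > 1/2. -/
set_option maxHeartbeats 1000000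


theorem cosh_add_sub_cos_add_gt_half (a b c d : ℝ)
    (ha : 0 < a) (hb0 : 0 < b) (hb : b < Real.pi / 2)
    (hα : Real.cosh a * Real.cos b > 1 / 2)
    (hc : 0 < c) (hd0 : 0 < d) (hd : d < Real.pi / 2)
    (h1 : Real.cosh c * Real.cos d = Real.cosh a * Real.cos b - 1 / 2)
    (h2 : Real.sinh c * Real.sin d = Real.sinh a * Real.sin b) :
    Real.cosh (a + c) - Real.cos (b + d) > 1 / 2 := by
  set A := Real.cosh a
  set B := Real.cos b
  set C := Real.cosh c
  set D := Real.cos d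
  set s := Real.sinh a
  set t := Real.sin b
  set u := Real.sinh c
  set v := Real.sin d
  have e1 : A ^ 2 - s ^ 2 = 1 := Real.cosh_sq_sub_sinh_sq a
  have e2 : C ^ 2 - u ^ 2 = 1 := Real.cosh_sq_sub_sinh_sq c
  have e3 : t ^ 2 + B ^ 2 = 1 := Real.sin_sq_add_cos_sq b
  have e4 : v ^ 2 + D ^ 2 = 1 := Real.sin_sq_add_cos_sq d
  have hsq : u ^ 2 * v ^ 2 = s ^ 2 * t ^ 2 := by
    have := congrArg (· ^ 2) h2
    simpa [mul_pow] using this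
  have hs : 0 < s := Real.sinh_pos_iff.2 ha
  have hu : 0 < u := Real.sinh_pos_iff.2 hc
  have ht : 0 < t := Real.sin_pos_of_pos_of_lt_pi hb0
    (hb.trans (by linarith [Real.pi_pos]))
  have hv : 0 < v := Real.sin_pos_of_pos_of_lt_pi hd0
    (hd.trans (by linarith [Real.pi_pos]))
  have hP : Real.cosh (a + c) - Real.cos (b + d)
      = A * C + s * u - (B * D - t * v) := by
    rw [Real.cosh_add, Real.cos_add]
  have hQ : Real.cosh (a - c) - Real.cos (b - d)
      = A * C - s * u - (B * D + t * v) := by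
    rw [Real.cosh_sub, Real.cos_sub]
  set P := A * C + s * u - (B * D - t * v) with hPdef
  set Q := A * C - s * u - (B * D + t * v) with hQdef
  have key : P * Q = 1 / 4 := by
    rw [hPdef, hQdef]
    linear_combination hsq + (C * D - A * B - 1 / 2) * h1 - 2 * s * t * h2 +
      (u ^ 2 + 1 - B ^ 2) * e1 + (A ^ 2 - D ^ 2) * e2 -
      (v ^ 2 + s ^ 2) * e3 - (1 - B ^ 2 + u ^ 2) * e4
  have hQ0 : 0 ≤ Q := by
    rw [← hQ]
    have := Real.one_le_cosh (a - c)
    have := Real.cos_le_one (b - d)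
    linarith
  have hQpos : 0 < Q := by
    rcases hQ0.lt_or_eq with h | h
    · exact h
    · exfalso; rw [← h] at key; norm_num at key
  have hPQ : Q < P := by
    rw [hPdef, hQdef]
    nlinarith [mul_pos hs hu, mul_pos ht hv]
  rw [hP]
  nlinarith [key, hQpos, hPQ]
end
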